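/- Let f : ℝ → [0,1] be the 2-periodic 'seesaw' function with f(x) = x − 2k for x ∈ [2k, 2k+1] and f(x) = 2k+2 − x for x ∈ [2k+1, 2k+2]. If U is uniform on [0,1] and V is any real random variable independent of U whose law is symmetric (V ≍ −V), then f(U + V) is uniform on [0,1]. -/

import Mathlib

/-!
`tent` is even and `2`-periodic and folds `[0, 2]` two-to-one onto `[0, 1]` by measure-preserving
pieces, so it pushes Lebesgue measure on any interval of length `2` forward to twice the uniform
law. For fixed `v`, `tent (U + v)` and `tent (U - v) = tent (v - U)` are the images of Lebesgue
measure on `[v, v + 1]` and `[v - 1, v]`, so their laws add up to twice the uniform law.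
Disintegrating along `V` and pairing `v` with `-v` (possible since `V ≍ -V`) gives the claim.
-/

open MeasureTheory ProbabilityTheory

/-- The 2-periodic "seesaw" (tent) function: distance to the nearest even integer.
On `[2k, 2k+1]` it equals `x − 2k`, and on `[2k+1, 2k+2]` it equals `2k+2 − x`. -/
noncomputable def tent (x : ℝ) : ℝ := |x - 2 * round (x / 2)|

open Set Function
open scoped ENNReal

lemma tent_eq_two_mul_abs_sub_round (x : ℝ) : tent x = 2 * |x / 2 - round (x / 2)| := by
  rw [tent, ← abs_two, ← abs_mul, abs_two]
  ring_nf

lemma tent_le_abs_sub_two_mul (x : ℝ) (z : ℤ) : tent x ≤ |x - 2 * z| := by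
  have := round_le (x / 2) z
  rw [tent_eq_two_mul_abs_sub_round]
  calc 2 * |x / 2 - round (x / 2)| ≤ 2 * |x / 2 - z| := by gcongr
    _ = |x - 2 * z| := by rw [← abs_two, ← abs_mul, abs_two]; ring_nf

lemma tent_neg (x : ℝ) : tent (-x) = tent x := by
  refine le_antisymm ?_ ?_
  · calc tent (-x) ≤ |-x - 2 * ((-round (x / 2) : ℤ) : ℝ)| := tent_le_abs_sub_two_mul _ _
      _ = tent x := by rw [tent, ← abs_neg]; push_cast; ring_nf
  · calc tent x ≤ |x - 2 * ((-round (-x / 2) : ℤ) : ℝ)| := tent_le_abs_sub_two_mul _ _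
      _ = tent (-x) := by rw [tent, ← abs_neg]; push_cast; ring_nf

lemma tent_periodic : Periodic tent 2 := by
  intro x
  rw [tent, tent, add_div, div_self two_ne_zero, round_add_one]
  push_cast
  ring_nf

lemma tent_of_mem_Icc_zero_one {x : ℝ} (hx : x ∈ Icc 0 1) : tent x = x := by
  refine le_antisymm ?_ ?_
  · simpa [abs_of_nonneg hx.1] using tent_le_abs_sub_two_mul x 0
  · rw [tent, le_abs]
    rcases le_or_gt (round (x / 2)) 0 with h | h
    · have : (round (x / 2) : ℝ) ≤ 0 := by exact_mod_cast h
      left; linarith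
    · have : (1 : ℝ) ≤ round (x / 2) := by exact_mod_cast h
      right; linarith [hx.2]

lemma tent_of_mem_Icc_one_two {x : ℝ} (hx : x ∈ Icc 1 2) : tent x = 2 - x := by
  rw [← tent_periodic.sub_eq, ← tent_neg, neg_sub]
  exact tent_of_mem_Icc_zero_one ⟨by linarith [hx.2], by linarith [hx.1]⟩

@[fun_prop]
lemma measurable_tent : Measurable tent := by
  unfold tent
  simp_rw [round_eq]
  fun_prop

lemma Function.Periodic.map_restrict_Ioc_eq {α : Type*} [MeasurableSpace α] {f : ℝ → α}
    {T : ℝ} (hf : Periodic f T) (hfm : Measurable f) (hT : 0 < T) (a b : ℝ) :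
    (volume.restrict (Ioc a (a + T))).map f = (volume.restrict (Ioc b (b + T))).map f := by
  have : VAddInvariantMeasure (AddSubgroup.zmultiples T) ℝ volume :=
    ⟨fun c s _ => measure_preimage_add _ _ _⟩
  ext s hs
  rw [Measure.map_apply hfm hs, Measure.map_apply hfm hs,
    Measure.restrict_apply (hfm hs), Measure.restrict_apply (hfm hs)]
  refine (isAddFundamentalDomain_Ioc hT a).measure_set_eq (isAddFundamentalDomain_Ioc hT b)
    (hfm hs) fun g => ?_
  ext x
  simp only [mem_preimage, hf.map_vadd_zmultiples]

lemma map_restrict_Icc_comp_add_const {α : Type*} [MeasurableSpace α] {f : ℝ → α}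
    (hf : Measurable f) (a b c : ℝ) :
    (volume.restrict (Icc a b)).map (fun u => f (u + c)) =
      (volume.restrict (Icc (a + c) (b + c))).map f := by
  have h := (measurePreserving_add_right volume c).restrict_preimage_emb
    (measurableEmbedding_addRight c) (Icc (a + c) (b + c))
  rw [preimage_add_const_Icc, add_sub_cancel_right, add_sub_cancel_right] at h
  rw [← h.map_eq, Measure.map_map hf h.measurable]
  rfl

lemma map_restrict_Icc_comp_const_sub {α : Type*} [MeasurableSpace α] {f : ℝ → α}
    (hf : Measurable f) (a b c : ℝ) :
    (volume.restrict (Icc a b)).map (fun u => f (c - u)) =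
      (volume.restrict (Icc (c - b) (c - a))).map f := by
  have h := (volume.measurePreserving_sub_left c).restrict_preimage_emb
    (MeasurableEquiv.subLeft c).measurableEmbedding (Icc (c - b) (c - a))
  rw [preimage_const_sub_Icc, sub_sub_cancel, sub_sub_cancel] at h
  rw [← h.map_eq, Measure.map_map hf h.measurable]
  rfl

lemma restrict_Icc_add_restrict_Icc {a b c : ℝ} (hab : a ≤ b) (hbc : b ≤ c) :
    volume.restrict (Icc a b) + volume.restrict (Icc b c) = volume.restrict (Icc a c) := by
  rw [← Measure.restrict_union_add_inter _ measurableSet_Icc, Icc_union_Icc_eq_Icc hab hbc,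
    Icc_inter_Icc_eq_singleton hab hbc, Measure.restrict_eq_zero.mpr (measure_singleton b),
    add_zero]

lemma map_tent_restrict_Icc_zero_two :
    (volume.restrict (Icc (0 : ℝ) 2)).map tent = 2 • volume.restrict (Icc 0 1) := by
  have h01 : (volume.restrict (Icc (0 : ℝ) 1)).map tent = volume.restrict (Icc 0 1) := by
    rw [Measure.map_congr (f := tent) (g := id) (ae_restrict_of_forall_mem measurableSet_Icc
      fun x hx => tent_of_mem_Icc_zero_one hx), Measure.map_id]
  have h12 : (volume.restrict (Icc (1 : ℝ) 2)).map tent = volume.restrict (Icc 0 1) := by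
    rw [Measure.map_congr (f := tent) (g := fun u => id (2 - u))
      (ae_restrict_of_forall_mem measurableSet_Icc fun x hx => tent_of_mem_Icc_one_two hx),
      map_restrict_Icc_comp_const_sub measurable_id]
    norm_num
  rw [← restrict_Icc_add_restrict_Icc zero_le_one one_le_two, Measure.map_add _ _ measurable_tent,
    h01, h12, two_smul]

lemma map_tent_restrict_Icc_add_two (a : ℝ) :
    (volume.restrict (Icc a (a + 2))).map tent = 2 • volume.restrict (Icc 0 1) := by
  have h := tent_periodic.map_restrict_Ioc_eq measurable_tent two_pos a 0
  rwa [zero_add, Measure.restrict_congr_set Ioc_ae_eq_Icc, Measure.restrict_congr_set Ioc_ae_eq_Icc,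
    map_tent_restrict_Icc_zero_two] at h

lemma map_tent_add_add_map_tent_sub (v : ℝ) :
    (volume.restrict (Icc (0 : ℝ) 1)).map (fun u => tent (u + v)) +
      (volume.restrict (Icc (0 : ℝ) 1)).map (fun u => tent (u - v)) =
      2 • volume.restrict (Icc 0 1) := by
  have hsub : (fun u => tent (u - v)) = fun u => tent (v - u) := by
    ext u; rw [← tent_neg, neg_sub]
  rw [hsub, map_restrict_Icc_comp_add_const measurable_tent,
    map_restrict_Icc_comp_const_sub measurable_tent, add_comm,
    ← Measure.map_add _ _ measurable_tent, zero_add, sub_zero, add_comm 1 v,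
    restrict_Icc_add_restrict_Icc (by linarith) (by linarith), show v + 1 = v - 1 + 2 by ring]
  exact map_tent_restrict_Icc_add_two (v - 1)

lemma map_prod_add_eq_of_symmetric {α : Type*} [MeasurableSpace α] {P ν : Measure ℝ} [SFinite P]
    [IsProbabilityMeasure ν] (hν : ν.map Neg.neg = ν) {f : ℝ → α} (hf : Measurable f)
    {Q : Measure α} (hQ : ∀ v, P.map (fun u => f (u + v)) + P.map (fun u => f (u - v)) = 2 • Q) :
    (P.prod ν).map (fun p => f (p.1 + p.2)) = Q := by
  ext s hs
  have hS : MeasurableSet ((fun p : ℝ × ℝ => f (p.1 + p.2)) ⁻¹' s) :=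
    hf.comp (measurable_fst.add measurable_snd) hs
  set F : ℝ → ℝ≥0∞ := fun v => P ((fun u => f (u + v)) ⁻¹' s) with hF
  have hFm : Measurable F := measurable_measure_prodMk_right hS
  have hFneg : ∫⁻ v, F (-v) ∂ν = ∫⁻ v, F v ∂ν := by
    conv_rhs => rw [← hν]
    exact (lintegral_map_equiv F (MeasurableEquiv.neg ℝ)).symm
  have hpair : ∀ v, F v + F (-v) = 2 * Q s := fun v => by
    have h := congrArg (· s) (hQ v)
    simp only [Measure.add_apply, Measure.smul_apply] at h
    rw [Measure.map_apply (by fun_prop) hs, Measure.map_apply (by fun_prop) hs] at h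
    simpa [hF, sub_eq_add_neg] using h
  refine (ENNReal.mul_right_inj two_ne_zero ENNReal.ofNat_ne_top).mp ?_
  calc 2 * (P.prod ν).map (fun p => f (p.1 + p.2)) s
      = ∫⁻ v, F v ∂ν + ∫⁻ v, F (-v) ∂ν := by
        rw [hFneg, two_mul, Measure.map_apply (by fun_prop) hs, Measure.prod_apply_symm hS]
        rfl
    _ = ∫⁻ v, 2 * Q s ∂ν := by
        rw [← lintegral_add_right (g := fun v => F (-v)) _ (hFm.comp measurable_neg)]
        exact lintegral_congr hpair
    _ = 2 * Q s := by simp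

/-- If `U` is uniform on `[0,1]` and `V` is independent of `U` with symmetric law,
then `tent (U + V)` is uniform on `[0,1]`. -/
theorem stmt_7 {Ω : Type*} [MeasureSpace Ω] (μ : Measure Ω) [IsProbabilityMeasure μ]
    (U V : Ω → ℝ) (hU : Measurable U) (hV : Measurable V)
    (hUnif : pdf.IsUniform U (Set.Icc (0:ℝ) 1) μ)
    (hIndep : IndepFun U V μ)
    (hSym : Measure.map V μ = Measure.map (fun ω => -V ω) μ) :
    pdf.IsUniform (fun ω => tent (U ω + V ω)) (Set.Icc (0:ℝ) 1) μ := by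
  have hcond : volume[|Icc (0 : ℝ) 1] = volume.restrict (Icc 0 1) := by
    simp [ProbabilityTheory.cond]
  have hlaw : μ.map (fun ω => (U ω, V ω)) = (volume.restrict (Icc 0 1)).prod (μ.map V) := by
    rw [← hcond, ← hUnif]
    exact (indepFun_iff_map_prod_eq_prod_map_map hU.aemeasurable hV.aemeasurable).mp hIndep
  have hV_symm : (μ.map V).map Neg.neg = μ.map V := by
    rw [Measure.map_map measurable_neg hV]
    exact hSym.symm
  have := Measure.isProbabilityMeasure_map (μ := μ) hV.aemeasurable
  rw [pdf.IsUniform, hcond, ← map_prod_add_eq_of_symmetric hV_symm measurable_tent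
    map_tent_add_add_map_tent_sub, ← hlaw, Measure.map_map (by fun_prop) (by fun_prop)]
  rfl
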